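/- arXiv:1905.10185 — 3 statements merged into one kernel-verified Lean document; each statement's English description precedes it below -/
import Mathlib

section
/- For every real number a0, every nonzero vector a = (a1, a2, a3) in ℝ³, and every real β, the matrix exponential of β(a0·σ0 + a1·σ1 + a2·σ2 + a3·σ3) equals e^{β a0} · ( cosh(β|a|)·σ0 + (sinh(β|a|)/|a|)·(a1·σ1 + a2·σ2 + a3·σ3) ), where |a| denotes the Euclidean norm of a. -/
/-- The Pauli matrices σ0, σ1, σ2, σ3 as 2×2 complex matrices. -/
noncomputable def pauli : Fin 4 → Matrix (Fin 2) (Fin 2) ℂ :=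
  ![!![1, 0; 0, 1], !![0, 1; 1, 0], !![0, -Complex.I; Complex.I, 0], !![1, 0; 0, -1]]

/-!
Write the exponent as `c • 1 + z • A` with `A = a1 σ1 + a2 σ2 + a3 σ3`. The Pauli relations give
`A * A = |a|² • 1`, so `U = A / |a|` is an involution; splitting the exponential series of `w • U`
into even and odd terms gives `cosh w • 1 + sinh w • U`. The scalar part `c • 1` is central and
contributes the factor `e^c`.
-/

open NormedSpace

section BanachAlgebra

variable {𝔸 : Type*} [NormedRing 𝔸] [NormedAlgebra ℂ 𝔸] [CompleteSpace 𝔸]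

theorem exp_smul_of_mul_self_eq_one {U : 𝔸} (hU : U * U = 1) (z : ℂ) :
    exp (z • U) = Complex.cosh z • (1 : 𝔸) + Complex.sinh z • U := by
  have hU_even (n : ℕ) : U ^ (2 * n) = 1 := by rw [pow_mul, sq, hU, one_pow]
  refine (exp_series_hasSum_exp' (𝕂 := ℂ) (z • U)).unique (HasSum.even_add_odd ?_ ?_)
  · convert (Complex.hasSum_cosh z).smul_const (1 : 𝔸) using 2 with n
    rw [smul_pow, hU_even, smul_smul, div_eq_inv_mul]
  · convert (Complex.hasSum_sinh z).smul_const U using 2 with n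
    rw [smul_pow, pow_succ U, hU_even, one_mul, smul_smul, div_eq_inv_mul]

theorem exp_smul_of_mul_self_eq_sq_smul_one {A : 𝔸} {r : ℂ} (hr : r ≠ 0)
    (hA : A * A = r ^ 2 • (1 : 𝔸)) (z : ℂ) :
    exp (z • A) = Complex.cosh (z * r) • (1 : 𝔸) + (Complex.sinh (z * r) / r) • A := by
  have hU : (r⁻¹ • A) * (r⁻¹ • A) = 1 := by
    rw [smul_mul_smul_comm, hA, smul_smul, ← sq, ← mul_pow, inv_mul_cancel₀ hr, one_pow, one_smul]
  have hzA : z • A = (z * r) • (r⁻¹ • A) := by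
    rw [smul_smul, mul_assoc, mul_inv_cancel₀ hr, mul_one]
  rw [hzA, exp_smul_of_mul_self_eq_one hU, smul_smul, div_eq_mul_inv]

theorem exp_smul_one_add (c : ℂ) (x : 𝔸) : exp (c • (1 : 𝔸) + x) = Complex.exp c • exp x := by
  let +nondep : NormedAlgebra ℚ 𝔸 := .restrictScalars ℚ ℂ 𝔸
  rw [exp_add_of_commute ((Commute.one_left x).smul_left c), ← Algebra.algebraMap_eq_smul_one,
    ← algebraMap_exp_comm, Complex.exp_eq_exp_ℂ, Algebra.smul_def]

theorem exp_smul_one_add_smul_of_mul_self_eq_sq_smul_one {A : 𝔸} {r : ℂ} (hr : r ≠ 0)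
    (hA : A * A = r ^ 2 • (1 : 𝔸)) (c z : ℂ) :
    exp (c • (1 : 𝔸) + z • A) =
      Complex.exp c • (Complex.cosh (z * r) • (1 : 𝔸) + (Complex.sinh (z * r) / r) • A) := by
  rw [exp_smul_one_add, exp_smul_of_mul_self_eq_sq_smul_one hr hA]

end BanachAlgebra

-- `exp` on matrices does not depend on a norm; the operator norm just makes the lemma applicable.
theorem Matrix.exp_smul_one_add_smul_of_mul_self_eq_sq_smul_one {m : Type*} [Fintype m]
    [DecidableEq m] {A : Matrix m m ℂ} {r : ℂ} (hr : r ≠ 0) (hA : A * A = r ^ 2 • 1) (c z : ℂ) :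
    exp (c • 1 + z • A) =
      Complex.exp c • (Complex.cosh (z * r) • 1 + (Complex.sinh (z * r) / r) • A) :=
  open scoped Matrix.Norms.Operator in
  _root_.exp_smul_one_add_smul_of_mul_self_eq_sq_smul_one hr hA c z

theorem pauli_zero : pauli 0 = 1 := by
  simp [pauli, Matrix.one_fin_two]

theorem pauli_vector_mul_self (a1 a2 a3 : ℂ) :
    (a1 • pauli 1 + a2 • pauli 2 + a3 • pauli 3) * (a1 • pauli 1 + a2 • pauli 2 + a3 • pauli 3) =
      (a1 ^ 2 + a2 ^ 2 + a3 ^ 2) • 1 := by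
  ext i j
  fin_cases i <;> fin_cases j <;> simp [pauli, Matrix.one_fin_two] <;> ring_nf <;> simp [Complex.I_sq]

/-- For every real `a0`, every nonzero `(a1,a2,a3) ∈ ℝ³` and every real `β`,
the matrix exponential of `β(a0·σ0 + a1·σ1 + a2·σ2 + a3·σ3)` equals
`e^{β a0}(cosh(β|a|)·σ0 + (sinh(β|a|)/|a|)·(a1·σ1 + a2·σ2 + a3·σ3))`. -/
theorem pauli_exponential (a0 a1 a2 a3 β : ℝ)
    (ha : (a1, a2, a3) ≠ (0, 0, 0)) :
    NormedSpace.exp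
        ((β : ℂ) • ((a0 : ℂ) • pauli 0 + (a1 : ℂ) • pauli 1 + (a2 : ℂ) • pauli 2
          + (a3 : ℂ) • pauli 3)) =
      (Real.exp (β * a0) : ℂ) •
        ((Real.cosh (β * Real.sqrt (a1 ^ 2 + a2 ^ 2 + a3 ^ 2)) : ℂ) • pauli 0 +
          ((Real.sinh (β * Real.sqrt (a1 ^ 2 + a2 ^ 2 + a3 ^ 2)) /
              Real.sqrt (a1 ^ 2 + a2 ^ 2 + a3 ^ 2) : ℝ) : ℂ) •
            ((a1 : ℂ) • pauli 1 + (a2 : ℂ) • pauli 2 + (a3 : ℂ) • pauli 3)) := by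
  have hpos : 0 < a1 ^ 2 + a2 ^ 2 + a3 ^ 2 := by
    contrapose! ha
    simp only [Prod.mk.injEq]
    refine ⟨?_, ?_, ?_⟩ <;> nlinarith [sq_nonneg a1, sq_nonneg a2, sq_nonneg a3]
  set r := Real.sqrt (a1 ^ 2 + a2 ^ 2 + a3 ^ 2)
  have hr : (r : ℂ) ≠ 0 := Complex.ofReal_ne_zero.2 (Real.sqrt_pos.2 hpos).ne'
  have hr_sq : (r : ℂ) ^ 2 = (a1 : ℂ) ^ 2 + (a2 : ℂ) ^ 2 + (a3 : ℂ) ^ 2 := by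
    exact_mod_cast Real.sq_sqrt hpos.le
  have hA := pauli_vector_mul_self a1 a2 a3
  rw [← hr_sq] at hA
  have hsplit : (β : ℂ) • ((a0 : ℂ) • pauli 0 + (a1 : ℂ) • pauli 1 + (a2 : ℂ) • pauli 2
      + (a3 : ℂ) • pauli 3) = ((β * a0 : ℝ) : ℂ) • 1 +
        (β : ℂ) • ((a1 : ℂ) • pauli 1 + (a2 : ℂ) • pauli 2 + (a3 : ℂ) • pauli 3) := by
    rw [pauli_zero]; push_cast; module
  rw [hsplit, Matrix.exp_smul_one_add_smul_of_mul_self_eq_sq_smul_one hr hA, pauli_zero]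
  simp only [Complex.ofReal_exp, Complex.ofReal_cosh, Complex.ofReal_sinh, Complex.ofReal_div,
    Complex.ofReal_mul]
end

section
/- Let a0 ∈ ℝ and a = (a1,a2,a3) ∈ ℝ³ nonzero be constants, and let Y0 : ℝ → ℝ and Y : ℝ → ℝ³ be continuous. Then the functions x0(β) = ∫₀^β e^{(β−λ)a0}·[ cosh((β−λ)|a|)·Y0(λ) + sinh((β−λ)|a|)·(a/|a|)·Y(λ) ] dλ and x(β) = ∫₀^β e^{(β−λ)a0}·[ sinh((β−λ)|a|)·Y0(λ)·(a/|a|) + ( (cosh((β−λ)|a|) − 1)·(a⊗a/|a|²) + I₃ )·Y(λ) ] dλ are differentiable, vanish at β = 0, and satisfy for all β: x0'(β) = a0·x0(β) + a·x(β) + Y0(β) and x'(β) = a0·x(β) + x0(β)·a + Y(β). -/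
/-! The integrands are `S (β - λ) (Y₀ λ, Y λ)` for the one-parameter group
`S t = e^{t a₀} exp (t N)` on `ℝ × ℝ³`, where `N (y₀, y) = (a·y, y₀ a)`. Since `Q = N / |a|`
satisfies `Q³ = Q`, the exponential series collapses to
`exp (t N) = 1 + sinh (t|a|) Q + (cosh (t|a|) - 1) Q²`, which is the kernel of the formulas.
For any one-parameter group, `S (β - λ) = S β * S (-λ)` turns the Duhamel integral into
`S β (∫₀^β S (-λ) Y λ dλ)`, and the product rule together with the fundamental theorem of
calculus gives the derivative `A x β + Y β`, with `A = a₀ + N` the generator. -/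

open intervalIntegral MeasureTheory

structure IsOneParameterGroup {R : Type*} [NormedRing R] [NormedAlgebra ℝ R]
    (S : ℝ → R) (A : R) : Prop where
  map_add : ∀ s t, S (s + t) = S s * S t
  map_zero : S 0 = 1
  hasDerivAt : ∀ t, HasDerivAt S (A * S t) t

namespace IsOneParameterGroup

variable {R : Type*} [NormedRing R] [NormedAlgebra ℝ R] {S : ℝ → R} {A : R}

theorem rescale (hS : IsOneParameterGroup S A) (c ν : ℝ) :
    IsOneParameterGroup (fun t => Real.exp (t * c) • S (t * ν)) (c • 1 + ν • A) where
  map_add s t := by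
    rw [add_mul, Real.exp_add, add_mul, hS.map_add, smul_mul_smul]
  map_zero := by simp [hS.map_zero]
  hasDerivAt t := by
    have hexp := (hasDerivAt_mul_const c (x := t)).exp
    have hS' := (hS.hasDerivAt (t * ν)).scomp t (hasDerivAt_mul_const ν)
    refine (hexp.smul hS').congr_deriv ?_
    simp only [Function.comp_apply, add_mul, smul_mul_assoc, one_mul, mul_smul_comm, smul_smul]
    module

theorem continuous (hS : IsOneParameterGroup S A) : Continuous S :=
  continuous_iff_continuousAt.2 fun t => (hS.hasDerivAt t).continuousAt

variable {E : Type*} [NormedAddCommGroup E] [NormedSpace ℝ E] [CompleteSpace E]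

theorem hasDerivAt_integral_apply {S : ℝ → E →L[ℝ] E} {A : E →L[ℝ] E}
    (hS : IsOneParameterGroup S A) {Y : ℝ → E} (hY : Continuous Y) (β : ℝ) :
    HasDerivAt (fun b => ∫ l in 0..b, S (b - l) (Y l))
      (A (∫ l in 0..β, S (β - l) (Y l)) + Y β) β := by
  have hint : Continuous fun l => S (-l) (Y l) := (hS.continuous.comp continuous_neg).clm_apply hY
  have hsplit : ∀ b, ∫ l in 0..b, S (b - l) (Y l) = S b (∫ l in 0..b, S (-l) (Y l)) := by
    intro b
    rw [← (S b).intervalIntegral_comp_comm (hint.intervalIntegrable _ _)]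
    simp_rw [sub_eq_add_neg, hS.map_add, mul_apply_eq_comp]
  have hinv : S β * S (-β) = 1 := by rw [← hS.map_add, add_neg_cancel, hS.map_zero]
  simp_rw [hsplit]
  convert (hS.hasDerivAt β).clm_apply (hint.integral_hasStrictDerivAt 0 β).hasDerivAt using 1
  rw [← mul_apply_eq_comp (S β), hinv, one_apply_eq_self, mul_apply_eq_comp]

end IsOneParameterGroup

section
variable {R : Type*} [NormedRing R] [NormedAlgebra ℝ R]

/-- `exp (t • Q)` when `Q ^ 3 = Q`. -/
noncomputable def hyperbolicExp (Q : R) (t : ℝ) : R :=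
  1 + Real.sinh t • Q + (Real.cosh t - 1) • Q ^ 2

theorem IsOneParameterGroup.hyperbolicExp {Q : R} (hQ : Q ^ 3 = Q) :
    IsOneParameterGroup (hyperbolicExp Q) Q where
  map_add s t := by
    have h4 : (Q ^ 2) ^ 2 = Q ^ 2 := by rw [← pow_mul, pow_succ, hQ, sq]
    simp only [_root_.hyperbolicExp, Real.sinh_add, Real.cosh_add, add_mul, mul_add, one_mul,
      mul_one, smul_mul_assoc, mul_smul_comm, ← pow_succ, ← pow_succ', ← sq]
    rw [hQ, h4]
    module
  map_zero := by simp [_root_.hyperbolicExp]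
  hasDerivAt t := by
    refine ((((Real.hasDerivAt_sinh t).smul_const Q).const_add 1).add
      (((Real.hasDerivAt_cosh t).sub_const 1).smul_const (Q ^ 2))).congr_deriv ?_
    simp only [_root_.hyperbolicExp, mul_add, mul_one, mul_smul_comm, ← sq, ← pow_succ', hQ]
    module

end

section
variable {ι : Type*} [Fintype ι]

noncomputable def boostGenerator (a : ι → ℝ) : (ℝ × (ι → ℝ)) →L[ℝ] ℝ × (ι → ℝ) :=
  LinearMap.toContinuousLinearMap
    { toFun y := (∑ j, a j * y.2 j, y.1 • a)
      map_add' y z := by ext <;> simp [mul_add, Finset.sum_add_distrib, add_mul]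
      map_smul' c y := by ext <;> simp [Finset.mul_sum, mul_left_comm, mul_assoc] }

@[simp]
theorem boostGenerator_apply (a : ι → ℝ) (y : ℝ × (ι → ℝ)) :
    boostGenerator a y = (∑ j, a j * y.2 j, y.1 • a) := rfl

theorem boostGenerator_apply_apply (a : ι → ℝ) (y : ℝ × (ι → ℝ)) :
    boostGenerator a (boostGenerator a y) = ((∑ j, a j ^ 2) * y.1, (∑ j, a j * y.2 j) • a) := by
  simp only [boostGenerator_apply, Pi.smul_apply, smul_eq_mul, Prod.mk.injEq, and_true,
    Finset.sum_mul]
  exact Finset.sum_congr rfl fun j _ => by ring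

theorem boostGenerator_pow_three (a : ι → ℝ) :
    boostGenerator a ^ 3 = (∑ j, a j ^ 2) • boostGenerator a := by
  refine ContinuousLinearMap.ext fun y => ?_
  rw [pow_succ', pow_two, mul_apply_eq_comp, mul_apply_eq_comp, boostGenerator_apply_apply]
  simp only [boostGenerator_apply, smul_apply, Prod.smul_mk, smul_smul, smul_eq_mul,
    Pi.smul_apply, Finset.sum_mul, Prod.mk.injEq, true_and]
  exact congrArg (· • a) (Finset.sum_congr rfl fun j _ => by ring)

theorem intervalIntegral_prod_pi {F : ℝ → ℝ × (ι → ℝ)} {s t : ℝ}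
    (hF : IntervalIntegrable F volume s t) :
    ∫ l in s..t, F l = (∫ l in s..t, (F l).1, fun i => ∫ l in s..t, (F l).2 i) := by
  refine Prod.ext ?_ (funext fun i => ?_)
  · exact ((ContinuousLinearMap.fst ℝ ℝ _).intervalIntegral_comp_comm hF).symm
  · exact (((ContinuousLinearMap.proj i).comp (.snd ℝ ℝ _)).intervalIntegral_comp_comm hF).symm

/-- The paper's `S_a(t)` when `ν = |a|`. -/
noncomputable def boostSemigroup (a0 ν : ℝ) (a : ι → ℝ) (t : ℝ) :
    (ℝ × (ι → ℝ)) →L[ℝ] ℝ × (ι → ℝ) :=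
  Real.exp (t * a0) • hyperbolicExp (ν⁻¹ • boostGenerator a) (t * ν)

variable {a : ι → ℝ} {ν : ℝ}

theorem isOneParameterGroup_boostSemigroup (a0 : ℝ) (hν0 : ν ≠ 0) (hν : ν ^ 2 = ∑ j, a j ^ 2) :
    IsOneParameterGroup (boostSemigroup a0 ν a) (a0 • 1 + boostGenerator a) := by
  have hQ : (ν⁻¹ • boostGenerator a) ^ 3 = ν⁻¹ • boostGenerator a := by
    rw [smul_pow, boostGenerator_pow_three, ← hν, smul_smul]
    congr 1
    field_simp
  have h := (IsOneParameterGroup.hyperbolicExp hQ).rescale a0 ν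
  rwa [smul_inv_smul₀ hν0] at h

theorem boostSemigroup_apply (a0 : ℝ) (hν0 : ν ≠ 0) (hν : ν ^ 2 = ∑ j, a j ^ 2)
    (t : ℝ) (y : ℝ × (ι → ℝ)) :
    boostSemigroup a0 ν a t y =
      (Real.exp (t * a0) * (Real.cosh (t * ν) * y.1 + Real.sinh (t * ν) * ∑ j, (a j / ν) * y.2 j),
        fun i => Real.exp (t * a0) * (Real.sinh (t * ν) * y.1 * (a i / ν)
          + ((Real.cosh (t * ν) - 1) * (a i / ν ^ 2) * (∑ j, a j * y.2 j) + y.2 i))) := by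
  rw [boostSemigroup, hyperbolicExp, pow_two]
  simp only [smul_apply, add_apply, one_apply_eq_self, mul_apply_eq_comp, map_smul,
    boostGenerator_apply_apply, ← hν]
  simp only [boostGenerator_apply]
  simp_rw [div_mul_eq_mul_div, ← Finset.sum_div]
  refine Prod.ext ?_ (funext fun i => ?_)
  · simp only [Prod.fst_add, Prod.smul_fst, smul_eq_mul]
    field_simp
    ring
  · simp only [Prod.snd_add, Prod.smul_snd, Pi.add_apply, Pi.smul_apply, smul_eq_mul]
    field_simp
    ring

end

/-- the Duhamel (variation-of-constants) formulas built from the semigroup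
`S_a(β)` vanish at `β = 0` and solve the inhomogeneous linear system
`x0' = a0 x0 + a·x + Y0`, `x' = a0 x + x0 a + Y`. -/
theorem duhamel_solution (a0 : ℝ) (a : Fin 3 → ℝ) (ha : a ≠ 0)
    (Y0 : ℝ → ℝ) (Y : ℝ → Fin 3 → ℝ) (hY0 : Continuous Y0) (hY : Continuous Y) :
    let na : ℝ := Real.sqrt (a 0 ^ 2 + a 1 ^ 2 + a 2 ^ 2)
    let x0 : ℝ → ℝ := fun β =>
      ∫ l in (0 : ℝ)..β, Real.exp ((β - l) * a0) *
        (Real.cosh ((β - l) * na) * Y0 l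
          + Real.sinh ((β - l) * na) * ∑ i, (a i / na) * Y l i)
    let x : ℝ → Fin 3 → ℝ := fun β i =>
      ∫ l in (0 : ℝ)..β, Real.exp ((β - l) * a0) *
        (Real.sinh ((β - l) * na) * Y0 l * (a i / na)
          + ((Real.cosh ((β - l) * na) - 1) * (a i / na ^ 2) * (∑ j, a j * Y l j) + Y l i))
    (x0 0 = 0) ∧ (∀ i, x 0 i = 0) ∧
    (∀ β : ℝ, HasDerivAt x0 (a0 * x0 β + (∑ i, a i * x β i) + Y0 β) β) ∧
    (∀ β : ℝ, ∀ i : Fin 3, HasDerivAt (fun b => x b i) (a0 * x β i + x0 β * a i + Y β i) β) := by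
  intro na x0 x
  have hna2 : na ^ 2 = ∑ j, a j ^ 2 := by
    rw [Fin.sum_univ_three]
    exact Real.sq_sqrt (by positivity)
  have hna : na ≠ 0 := by
    refine fun h => ha (funext fun j => ?_)
    have hsum : ∑ j, a j ^ 2 = 0 := by rw [← hna2, h, sq, zero_mul]
    simpa using (Finset.sum_eq_zero_iff_of_nonneg fun j _ => sq_nonneg (a j)).1 hsum j
  have hS := isOneParameterGroup_boostSemigroup a0 hna hna2
  have hYY : Continuous fun l => (Y0 l, Y l) := hY0.prodMk hY
  have hv : ∀ β, ∫ l in (0 : ℝ)..β, boostSemigroup a0 na a (β - l) (Y0 l, Y l) = (x0 β, x β) := by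
    intro β
    have hF : Continuous fun l => boostSemigroup a0 na a (β - l) (Y0 l, Y l) :=
      (hS.continuous.comp (continuous_sub_left β)).clm_apply hYY
    rw [intervalIntegral_prod_pi (hF.intervalIntegrable _ _)]
    simp only [boostSemigroup_apply a0 hna hna2]
    rfl
  have hderiv : ∀ β, HasDerivAt (fun b => (x0 b, x b))
      ((a0 • 1 + boostGenerator a) (x0 β, x β) + (Y0 β, Y β)) β := fun β => by
    simpa only [hv] using hS.hasDerivAt_integral_apply hYY β
  refine ⟨integral_same, fun _ => integral_same, fun β => ?_, fun β i => ?_⟩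
  · simpa using (hderiv β).hasFDerivAt.fst.hasDerivAt
  · simpa using hasDerivAt_pi.1 (hderiv β).hasFDerivAt.snd.hasDerivAt i
end

section
/- Let ε > 0, γ > 0, let V be a real-valued Schwartz function on ℝ², and let w0, w1, w2, w3 : ℝ²×ℝ² → ℝ be Schwartz functions of (r,p) such that w0(r,−p) = w0(r,p) and w_s(r,−p) = −w_s(r,p) for s = 1,2,3 and all (r,p). Write p⃗ = (p1,p2,0), ∇⃗ = (∂_{r_1}, ∂_{r_2}, 0), w⃗ = (w1,w2,w3), and define T0(w) = (1/(2γ))·p⃗·∇⃗w0 + (ε/2)·∇⃗·w⃗ + Θ_ε(V)w0, and for s = 1,2,3: T_s(w) = (1/(2γ))·p⃗·∇⃗w_s + (ε/2)·∂_{r_s}w0 + Θ_ε(V)w_s + Σ_{j,k} η_{sjk}·w_j·p⃗_k (interpreting ∂_{r_3}w0 = 0). Then for every r ∈ ℝ² and both choices of sign: ∫_{ℝ²} [ T0(w)(r,p) ± (p⃗/|p⃗|)·(T1(w), T2(w), T3(w))(r,p) ] dp = 0. -/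
open MeasureTheory

/-- The Levi-Civita symbol on three indices, with `η 0 1 2 = 1`. -/
def lc : Fin 3 → Fin 3 → Fin 3 → ℝ := fun j s t =>
  if (j, s, t) = (0, 1, 2) ∨ (j, s, t) = (1, 2, 0) ∨ (j, s, t) = (2, 0, 1) then 1
  else if (j, s, t) = (0, 2, 1) ∨ (j, s, t) = (2, 1, 0) ∨ (j, s, t) = (1, 0, 2) then -1
  else 0

noncomputable section

abbrev E2 : Type := EuclideanSpace ℝ (Fin 2)

/-- Partial derivative `∂_{r_s}` of a function on phase space `ℝ²×ℝ²`. -/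
def drF (s : Fin 2) (f : E2 × E2 → ℝ) (x : E2 × E2) : ℝ :=
  fderiv ℝ f x (EuclideanSpace.single s 1, 0)

/-- Partial derivative `∂_{r_j}` for `j = 1,2,3`, with `∂_{r_3} = 0`. -/
def drF3 (j : Fin 3) (f : E2 × E2 → ℝ) (x : E2 × E2) : ℝ :=
  if h : (j : ℕ) < 2 then drF ⟨j, h⟩ f x else 0

/-- The pseudodifferential operator `Θ_ε(V)` applied to a real-valued phase-space function. -/
def ThetaOp (ε : ℝ) (V : SchwartzMap E2 ℝ) (f : E2 × E2 → ℝ) (x : E2 × E2) : ℂ :=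
  (Complex.I / ε) * (((2 * Real.pi) ^ 2)⁻¹ : ℝ) *
    ∫ q : E2 × E2,
      ((V (x.1 + (ε / 2) • q.1) - V (x.1 - (ε / 2) • q.1) : ℝ) : ℂ) * (f (x.1, q.2) : ℂ) *
        Complex.exp (-Complex.I * ((inner ℝ (x.2 - q.2) q.1 : ℝ) : ℂ))

/-! Under `p ↦ -p`, `T0` is odd and every `T_s` is even: `r`-derivatives keep the parity of
`w`, the multiplier `p` and the operator `Θ_ε(V)` (substitute `(ξ, p') ↦ (-ξ, -p')`) reverse it,
and the cross term `η_{sjk} w_j p_k` pairs two odd factors. As `p⃗ / |p⃗|` is odd, both band-moment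
integrands are odd in `p`, so their integrals vanish. -/

theorem Prod.isNegInvariant_volume {α β : Type*} [MeasureSpace α] [MeasureSpace β]
    [AddGroup α] [AddGroup β] [MeasurableNeg α] [MeasurableNeg β]
    [SFinite (volume : Measure α)] [SFinite (volume : Measure β)]
    [(volume : Measure α).IsNegInvariant] [(volume : Measure β).IsNegInvariant] :
    (volume : Measure (α × β)).IsNegInvariant :=
  ⟨((Measure.measurePreserving_neg volume).prod (Measure.measurePreserving_neg volume)).map_eq⟩

theorem Function.Odd.integral_eq_zero {G E : Type*} [MeasurableSpace G] [AddGroup G]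
    [MeasurableNeg G] [NormedAddCommGroup E] [NormedSpace ℝ E] {μ : Measure G} [μ.IsNegInvariant]
    {f : G → E} (hf : f.Odd) : ∫ x, f x ∂μ = 0 := by
  have h := integral_neg_eq_self f μ
  simp only [show ∀ x, f (-x) = -f x from hf, integral_neg] at h
  have h2 : (2 : ℝ) • ∫ x, f x ∂μ = 0 := by
    rw [two_smul]; nth_rw 1 [← h]; exact neg_add_cancel _
  exact (smul_eq_zero.mp h2).resolve_left two_ne_zero

theorem fderiv_neg_snd_apply_inl {E F G : Type*} [NormedAddCommGroup E] [NormedSpace ℝ E]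
    [NormedAddCommGroup F] [NormedSpace ℝ F] [NormedAddCommGroup G] [NormedSpace ℝ G]
    {f : E × F → G} (hf : Differentiable ℝ f) {c : ℝ} (h : ∀ r p, f (r, -p) = c • f (r, p))
    (r : E) (p : F) (v : E) :
    fderiv ℝ f (r, -p) (v, 0) = c • fderiv ℝ f (r, p) (v, 0) := by
  set N : E × F →L[ℝ] E × F := (ContinuousLinearMap.id ℝ E).prodMap (-ContinuousLinearMap.id ℝ F)
  have hfN : f ∘ N = c • f := funext fun x => h x.1 x.2
  have hchain := fderiv_comp (r, p) (hf (N (r, p))) N.differentiableAt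
  rw [N.fderiv, hfN, fderiv_const_smul (hf _)] at hchain
  simpa [N] using congrArg (fun L => L (v, 0)) hchain.symm

section MomentumParity

variable {f : E2 × E2 → ℝ} {c : ℝ}

theorem drF_neg_snd (hf : Differentiable ℝ f) (h : ∀ r p, f (r, -p) = c * f (r, p))
    (s : Fin 2) (r p : E2) : drF s f (r, -p) = c * drF s f (r, p) :=
  fderiv_neg_snd_apply_inl hf h r p _

theorem drF3_neg_snd (hf : Differentiable ℝ f) (h : ∀ r p, f (r, -p) = c * f (r, p))
    (j : Fin 3) (r p : E2) : drF3 j f (r, -p) = c * drF3 j f (r, p) := by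
  unfold drF3
  split_ifs
  · exact drF_neg_snd hf h _ r p
  · exact (mul_zero c).symm

theorem ThetaOp_neg_snd (ε : ℝ) (V : SchwartzMap E2 ℝ) (h : ∀ r p, f (r, -p) = c * f (r, p))
    (r p : E2) : ThetaOp ε V f (r, -p) = -c * ThetaOp ε V f (r, p) := by
  have := Prod.isNegInvariant_volume (α := E2) (β := E2)
  unfold ThetaOp
  rw [← integral_neg_eq_self, mul_left_comm (-(c : ℂ)), ← integral_const_mul (-(c : ℂ))]
  congr 1
  refine integral_congr_ae (.of_forall fun q => ?_)
  have hphase : (inner ℝ (-p + q.2) (-q.1) : ℝ) = inner ℝ (p - q.2) q.1 := by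
    rw [neg_add_eq_sub, ← neg_sub, inner_neg_neg]
  simp only [Prod.fst_neg, Prod.snd_neg, h, smul_neg, sub_neg_eq_add, ← sub_eq_add_neg, hphase]
  push_cast
  ring

end MomentumParity

def momentumVec (x : E2 × E2) : Fin 3 → ℝ := ![x.2 0, x.2 1, 0]

theorem momentumVec_neg_snd (r p : E2) : momentumVec (r, -p) = -momentumVec (r, p) := by
  ext k
  fin_cases k <;> simp [momentumVec]

section Transport

variable (ε γ : ℝ) (V : SchwartzMap E2 ℝ) (w0 : SchwartzMap (E2 × E2) ℝ)
  (wv : Fin 3 → SchwartzMap (E2 × E2) ℝ)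

def transportT0 (x : E2 × E2) : ℂ :=
  ((1 / (2 * γ)) * ∑ s : Fin 2, x.2 s * drF s (⇑w0) x : ℝ)
    + ((ε / 2) * (drF 0 (⇑(wv 0)) x + drF 1 (⇑(wv 1)) x) : ℝ)
    + ThetaOp ε V (⇑w0) x

def transportT (j : Fin 3) (x : E2 × E2) : ℂ :=
  ((1 / (2 * γ)) * ∑ s : Fin 2, x.2 s * drF s (⇑(wv j)) x : ℝ)
    + ((ε / 2) * drF3 j (⇑w0) x : ℝ)
    + ThetaOp ε V (⇑(wv j)) x
    + ((∑ s : Fin 3, ∑ k : Fin 3, lc j s k * wv s x * momentumVec x k : ℝ) : ℂ)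

variable {w0 wv}

theorem transportT0_neg_snd (hw0 : ∀ r p, w0 (r, -p) = w0 (r, p))
    (hwv : ∀ j : Fin 3, ∀ r p, wv j (r, -p) = -wv j (r, p)) (r p : E2) :
    transportT0 ε γ V w0 wv (r, -p) = -transportT0 ε γ V w0 wv (r, p) := by
  replace hw0 r p : w0 (r, -p) = 1 * w0 (r, p) := (hw0 r p).trans (one_mul _).symm
  replace hwv j r p : wv j (r, -p) = -1 * wv j (r, p) := (hwv j r p).trans (neg_one_mul _).symm
  simp only [transportT0, Fin.sum_univ_two, PiLp.neg_apply, drF_neg_snd w0.differentiable hw0,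
    drF_neg_snd (wv _).differentiable (hwv _), ThetaOp_neg_snd ε V hw0]
  push_cast
  ring

theorem transportT_neg_snd (hw0 : ∀ r p, w0 (r, -p) = w0 (r, p))
    (hwv : ∀ j : Fin 3, ∀ r p, wv j (r, -p) = -wv j (r, p)) (j : Fin 3) (r p : E2) :
    transportT ε γ V w0 wv j (r, -p) = transportT ε γ V w0 wv j (r, p) := by
  have hwv' j r p : wv j (r, -p) = -1 * wv j (r, p) := (hwv j r p).trans (neg_one_mul _).symm
  replace hw0 r p : w0 (r, -p) = 1 * w0 (r, p) := (hw0 r p).trans (one_mul _).symm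
  simp only [transportT, momentumVec, Fin.sum_univ_two, Fin.sum_univ_three, PiLp.neg_apply,
    drF_neg_snd (wv _).differentiable (hwv' _), drF3_neg_snd w0.differentiable hw0,
    ThetaOp_neg_snd ε V (hwv' _), hwv, Matrix.cons_val_zero, Matrix.cons_val_one,
    Matrix.cons_val_two, Matrix.head_cons, Matrix.tail_cons]
  push_cast
  ring

end Transport

theorem transport_band_moments_vanish_general (ε γ : ℝ)
    (V : SchwartzMap E2 ℝ)
    (w0 : SchwartzMap (E2 × E2) ℝ) (wv : Fin 3 → SchwartzMap (E2 × E2) ℝ)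
    (hw0 : ∀ r p, w0 (r, -p) = w0 (r, p))
    (hwv : ∀ j : Fin 3, ∀ r p, wv j (r, -p) = -wv j (r, p)) :
    -- the momentum vector p⃗ = (p1, p2, 0)
    let pvec : E2 × E2 → Fin 3 → ℝ := fun x => ![x.2 0, x.2 1, 0]
    -- T0(w)
    let T0 : E2 × E2 → ℂ := fun x =>
      ((1 / (2 * γ)) * ∑ s : Fin 2, x.2 s * drF s (⇑w0) x : ℝ)
        + ((ε / 2) * (drF 0 (⇑(wv 0)) x + drF 1 (⇑(wv 1)) x) : ℝ)
        + ThetaOp ε V (⇑w0) x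
    -- T_s(w) for s = 1,2,3
    let T : Fin 3 → E2 × E2 → ℂ := fun j x =>
      ((1 / (2 * γ)) * ∑ s : Fin 2, x.2 s * drF s (⇑(wv j)) x : ℝ)
        + ((ε / 2) * drF3 j (⇑w0) x : ℝ)
        + ThetaOp ε V (⇑(wv j)) x
        + ((∑ s : Fin 3, ∑ k : Fin 3, lc j s k * wv s x * pvec x k : ℝ) : ℂ)
    ∀ r : E2,
      (∫ p : E2, (T0 (r, p) +
        ((Real.sqrt (p 0 ^ 2 + p 1 ^ 2))⁻¹ : ℝ) *
          ∑ j : Fin 3, ((pvec (r, p) j : ℝ) : ℂ) * T j (r, p)) = 0) ∧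
      (∫ p : E2, (T0 (r, p) -
        ((Real.sqrt (p 0 ^ 2 + p 1 ^ 2))⁻¹ : ℝ) *
          ∑ j : Fin 3, ((pvec (r, p) j : ℝ) : ℂ) * T j (r, p)) = 0) := by
  intro pvec T0 T r
  have hT0 (p : E2) : T0 (r, -p) = -T0 (r, p) := transportT0_neg_snd ε γ V hw0 hwv r p
  have hT (j : Fin 3) (p : E2) : T j (r, -p) = T j (r, p) := transportT_neg_snd ε γ V hw0 hwv j r p
  have hpvec (j : Fin 3) (p : E2) : pvec (r, -p) j = -pvec (r, p) j :=
    congrFun (momentumVec_neg_snd r p) j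
  have hnorm (p : E2) : (-p) 0 ^ 2 + (-p) 1 ^ 2 = p 0 ^ 2 + p 1 ^ 2 := by
    simp only [PiLp.neg_apply, neg_sq]
  constructor <;>
  · refine Function.Odd.integral_eq_zero fun p => ?_
    simp only [hT0, hT, hpvec, hnorm, Complex.ofReal_neg, neg_mul, Finset.sum_neg_distrib]
    ring

/-- the band moments `⟨(Tw)_±⟩` of the scaled graphene Wigner transport
operator vanish whenever the Wigner function has parity structure
(even, odd, odd, odd) in the momentum variable. -/
theorem transport_band_moments_vanish (ε γ : ℝ) (hε : 0 < ε) (hγ : 0 < γ)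
    (V : SchwartzMap E2 ℝ)
    (w0 : SchwartzMap (E2 × E2) ℝ) (wv : Fin 3 → SchwartzMap (E2 × E2) ℝ)
    (hw0 : ∀ r p, w0 (r, -p) = w0 (r, p))
    (hwv : ∀ j : Fin 3, ∀ r p, wv j (r, -p) = -wv j (r, p)) :
    -- the momentum vector p⃗ = (p1, p2, 0)
    let pvec : E2 × E2 → Fin 3 → ℝ := fun x => ![x.2 0, x.2 1, 0]
    -- T0(w)
    let T0 : E2 × E2 → ℂ := fun x =>
      ((1 / (2 * γ)) * ∑ s : Fin 2, x.2 s * drF s (⇑w0) x : ℝ)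
        + ((ε / 2) * (drF 0 (⇑(wv 0)) x + drF 1 (⇑(wv 1)) x) : ℝ)
        + ThetaOp ε V (⇑w0) x
    -- T_s(w) for s = 1,2,3
    let T : Fin 3 → E2 × E2 → ℂ := fun j x =>
      ((1 / (2 * γ)) * ∑ s : Fin 2, x.2 s * drF s (⇑(wv j)) x : ℝ)
        + ((ε / 2) * drF3 j (⇑w0) x : ℝ)
        + ThetaOp ε V (⇑(wv j)) x
        + ((∑ s : Fin 3, ∑ k : Fin 3, lc j s k * wv s x * pvec x k : ℝ) : ℂ)
    ∀ r : E2,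
      (∫ p : E2, (T0 (r, p) +
        ((Real.sqrt (p 0 ^ 2 + p 1 ^ 2))⁻¹ : ℝ) *
          ∑ j : Fin 3, ((pvec (r, p) j : ℝ) : ℂ) * T j (r, p)) = 0) ∧
      (∫ p : E2, (T0 (r, p) -
        ((Real.sqrt (p 0 ^ 2 + p 1 ^ 2))⁻¹ : ℝ) *
          ∑ j : Fin 3, ((pvec (r, p) j : ℝ) : ℂ) * T j (r, p)) = 0) :=
  transport_band_moments_vanish_general ε γ V w0 wv hw0 hwv

end
end
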